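/- For each δ = 1,…,d let X_δ ⊂ ℝ be a finite set and let Φ_δ, Ψ_δ be finite families of functions ℝ → ℝ of sizes N_δ and M_δ with overlap parameters p_δ and q_δ, such that csupp of each member of Φ_δ and Ψ_δ meets X_δ. Let Φ and Ψ be the corresponding tensor-product families and X = X_1 × … × X_d. Then #NNZ(Φ,Ψ,X) ≤ ∏_{δ=1}^d (q_δ·N_δ + p_δ·M_δ). (The sparsity bound (eq:nnz) of the paper.) -/

import Mathlib

open Set

/-- The convex hull of the support of a function on `ℝ^k` (including `k = 1`,
where `ℝ` itself is used). -/
noncomputable def csupp {E : Type*} [AddCommGroup E] [Module ℝ E] (f : E → ℝ) : Set E :=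
  convexHull ℝ (Function.support f)

/-- The potential sparsity pattern of two indexed families of functions with respect to a
set of quadrature points `X`. -/
def NNZ {ι κ E : Type*} [AddCommGroup E] [Module ℝ E]
    (Φ : ι → E → ℝ) (Ψ : κ → E → ℝ) (X : Set E) : Set (ι × κ) :=
  {nm | (X ∩ csupp (Φ nm.1) ∩ csupp (Ψ nm.2)).Nonempty}

private lemma my_ncard_iUnion_le {ι α : Type*} [Fintype ι] (s : ι → Set α)
    (h : ∀ i, (s i).Finite) : (⋃ i, s i).ncard ≤ ∑ i, (s i).ncard := by
  classical
  have : ∀ t : Finset ι, (⋃ i ∈ t, s i).ncard ≤ ∑ i ∈ t, (s i).ncard := by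
    intro t
    induction t using Finset.induction with
    | empty => simp
    | insert _ _ hx ih =>
      rename_i a t'
      rw [Finset.set_biUnion_insert, Finset.sum_insert hx]
      exact (Set.ncard_union_le _ _).trans (by gcongr)
  simpa using this Finset.univ

private lemma nnz_dim_one {N M : ℕ} (X : Finset ℝ) (Φ : Fin N → ℝ → ℝ) (Ψ : Fin M → ℝ → ℝ)
    (hΦ : ∀ n, (csupp (Φ n) ∩ (X : Set ℝ)).Nonempty)
    (hΨ : ∀ m, (csupp (Ψ m) ∩ (X : Set ℝ)).Nonempty) :
    (NNZ Φ Ψ (X : Set ℝ)).ncard ≤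
      (X.sup fun x => {m : Fin M | x ∈ csupp (Ψ m)}.ncard) * N +
      (X.sup fun x => {n : Fin N | x ∈ csupp (Φ n)}.ncard) * M := by
  classical
  set q := X.sup fun x => {m : Fin M | x ∈ csupp (Ψ m)}.ncard with hq
  set p := X.sup fun x => {n : Fin N | x ∈ csupp (Φ n)}.ncard with hp
  have hXΦ : ∀ n, (X.filter (fun x => x ∈ csupp (Φ n))).Nonempty := by
    intro n; obtain ⟨x, hx1, hx2⟩ := hΦ n
    exact ⟨x, Finset.mem_filter.2 ⟨hx2, hx1⟩⟩
  have hXΨ : ∀ m, (X.filter (fun x => x ∈ csupp (Ψ m))).Nonempty := by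
    intro m; obtain ⟨x, hx1, hx2⟩ := hΨ m
    exact ⟨x, Finset.mem_filter.2 ⟨hx2, hx1⟩⟩
  set a : Fin N → ℝ := fun n => (X.filter (fun x => x ∈ csupp (Φ n))).min' (hXΦ n) with ha
  set b : Fin M → ℝ := fun m => (X.filter (fun x => x ∈ csupp (Ψ m))).min' (hXΨ m) with hb
  have haX : ∀ n, a n ∈ X ∧ a n ∈ csupp (Φ n) := by
    intro n
    have := Finset.min'_mem _ (hXΦ n)
    simpa [Finset.mem_filter] using this
  have hbX : ∀ m, b m ∈ X ∧ b m ∈ csupp (Ψ m) := by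
    intro m
    have := Finset.min'_mem _ (hXΨ m)
    simpa [Finset.mem_filter] using this
  have key : NNZ Φ Ψ (X : Set ℝ) ⊆
      (⋃ n : Fin N, {n} ×ˢ {m : Fin M | a n ∈ csupp (Ψ m)}) ∪
      (⋃ m : Fin M, {n : Fin N | b m ∈ csupp (Φ n)} ×ˢ {m}) := by
    rintro ⟨n, m⟩ ⟨x, ⟨⟨hxX, hxΦ⟩, hxΨ⟩⟩
    by_cases hcase : a n ∈ csupp (Ψ m)
    · left
      exact Set.mem_iUnion.2 ⟨n, by simp [hcase]⟩
    · right
      refine Set.mem_iUnion.2 ⟨m, ?_⟩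
      have han : a n ≤ x := Finset.min'_le _ _ (Finset.mem_filter.2 ⟨hxX, hxΦ⟩)
      have hbm : b m ≤ x := Finset.min'_le _ _ (Finset.mem_filter.2 ⟨hxX, hxΨ⟩)
      have hab : a n ≤ b m := by
        by_contra hlt
        push_neg at hlt
        exact hcase ((convex_convexHull ℝ _).ordConnected.out (hbX m).2 hxΨ
          ⟨le_of_lt hlt, han⟩)
      have : b m ∈ csupp (Φ n) :=
        (convex_convexHull ℝ _).ordConnected.out (haX n).2 hxΦ ⟨hab, hbm⟩
      simp [this]
  have hqb : ∀ n : Fin N, {m : Fin M | a n ∈ csupp (Ψ m)}.ncard ≤ q :=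
    fun n => Finset.le_sup (f := fun x => {m : Fin M | x ∈ csupp (Ψ m)}.ncard) (haX n).1
  have hpb : ∀ m : Fin M, {n : Fin N | b m ∈ csupp (Φ n)}.ncard ≤ p :=
    fun m => Finset.le_sup (f := fun x => {n : Fin N | x ∈ csupp (Φ n)}.ncard) (hbX m).1
  calc (NNZ Φ Ψ (X : Set ℝ)).ncard
      ≤ ((⋃ n : Fin N, {n} ×ˢ {m : Fin M | a n ∈ csupp (Ψ m)}) ∪
          (⋃ m : Fin M, {n : Fin N | b m ∈ csupp (Φ n)} ×ˢ {m})).ncard :=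
        Set.ncard_le_ncard key (Set.toFinite _)
    _ ≤ (⋃ n : Fin N, {n} ×ˢ {m : Fin M | a n ∈ csupp (Ψ m)}).ncard +
          (⋃ m : Fin M, {n : Fin N | b m ∈ csupp (Φ n)} ×ˢ {m}).ncard :=
        Set.ncard_union_le _ _
    _ ≤ (∑ n : Fin N, ({n} ×ˢ {m : Fin M | a n ∈ csupp (Ψ m)}).ncard) +
          (∑ m : Fin M, ({n : Fin N | b m ∈ csupp (Φ n)} ×ˢ {m}).ncard) :=
        add_le_add (my_ncard_iUnion_le _ fun _ => Set.toFinite _)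
          (my_ncard_iUnion_le _ fun _ => Set.toFinite _)
    _ ≤ (∑ _n : Fin N, q) + (∑ _m : Fin M, p) := by
        refine add_le_add (Finset.sum_le_sum fun n _ => ?_)
          (Finset.sum_le_sum fun m _ => ?_)
        · rw [Set.singleton_prod, Set.ncard_image_of_injective _ (fun x y h => by simpa using h)]
          exact hqb n
        · rw [Set.prod_singleton, Set.ncard_image_of_injective _ (fun x y h => by
            simpa using h)]
          exact hpb m
    _ = q * N + p * M := by simp [mul_comm]

private lemma mem_csupp_tensor {d : ℕ} (f : Fin d → ℝ → ℝ) (x : Fin d → ℝ) :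
    x ∈ csupp (fun y : Fin d → ℝ => ∏ δ, f δ (y δ)) ↔ ∀ δ, x δ ∈ csupp (f δ) := by
  have hsupp : Function.support (fun y : Fin d → ℝ => ∏ δ, f δ (y δ)) =
      Set.pi Set.univ (fun δ => Function.support (f δ)) := by
    ext y
    simp [Function.mem_support, Finset.prod_eq_zero_iff]
  unfold csupp
  rw [hsupp, convexHull_pi]
  simp [Set.mem_pi]

/-- The sparsity bound (eq:nnz): for the tensor-product families `Φ`, `Ψ` built from the
univariate families `Φ_δ` (of size `N_δ`, overlap parameter
`p_δ = max_{x ∈ X_δ} #{n : x ∈ csupp (Φ_δ n)}`) and `Ψ_δ` (of size `M_δ`, overlap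
parameter `q_δ`), each of whose members has `csupp` meeting `X_δ`, we have
`#NNZ(Φ,Ψ,X) ≤ ∏_δ (q_δ·N_δ + p_δ·M_δ)` where `X = X₁ × … × X_d`. -/
theorem card_nnz_tensor_le {d : ℕ} (Nn Mm : Fin d → ℕ)
    (X : Fin d → Finset ℝ)
    (Φ : ∀ δ, Fin (Nn δ) → ℝ → ℝ) (Ψ : ∀ δ, Fin (Mm δ) → ℝ → ℝ)
    (hΦ : ∀ δ n, (csupp (Φ δ n) ∩ (X δ : Set ℝ)).Nonempty)
    (hΨ : ∀ δ m, (csupp (Ψ δ m) ∩ (X δ : Set ℝ)).Nonempty) :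
    (NNZ
        (fun n : ∀ δ, Fin (Nn δ) => fun x : Fin d → ℝ => ∏ δ, Φ δ (n δ) (x δ))
        (fun m : ∀ δ, Fin (Mm δ) => fun x : Fin d → ℝ => ∏ δ, Ψ δ (m δ) (x δ))
        (Set.pi Set.univ fun δ => (X δ : Set ℝ))).ncard ≤
      ∏ δ, (((X δ).sup fun x => {m : Fin (Mm δ) | x ∈ csupp (Ψ δ m)}.ncard) * Nn δ +
            ((X δ).sup fun x => {n : Fin (Nn δ) | x ∈ csupp (Φ δ n)}.ncard) * Mm δ) := by
  classical
  set S : ∀ δ, Set (Fin (Nn δ) × Fin (Mm δ)) := fun δ => NNZ (Φ δ) (Ψ δ) (X δ : Set ℝ) with hS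
  set e : (∀ δ, Fin (Nn δ) × Fin (Mm δ)) → (∀ δ, Fin (Nn δ)) × (∀ δ, Fin (Mm δ)) :=
    fun f => (fun δ => (f δ).1, fun δ => (f δ).2) with he
  have einj : Function.Injective e := by
    intro f g h
    funext δ
    have h1 := congrArg (fun z : (∀ δ, Fin (Nn δ)) × (∀ δ, Fin (Mm δ)) => z.1 δ) h
    have h2 := congrArg (fun z : (∀ δ, Fin (Nn δ)) × (∀ δ, Fin (Mm δ)) => z.2 δ) h
    exact Prod.ext h1 h2
  have hset : NNZ
        (fun n : ∀ δ, Fin (Nn δ) => fun x : Fin d → ℝ => ∏ δ, Φ δ (n δ) (x δ))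
        (fun m : ∀ δ, Fin (Mm δ) => fun x : Fin d → ℝ => ∏ δ, Ψ δ (m δ) (x δ))
        (Set.pi Set.univ fun δ => (X δ : Set ℝ)) = e '' (Set.pi Set.univ S) := by
    ext ⟨n, m⟩
    constructor
    · rintro ⟨x, ⟨⟨hxX, hxΦ⟩, hxΨ⟩⟩
      refine ⟨fun δ => (n δ, m δ), fun δ _ => ?_, rfl⟩
      have h1 := (mem_csupp_tensor (fun δ => Φ δ (n δ)) x).1 hxΦ
      have h2 := (mem_csupp_tensor (fun δ => Ψ δ (m δ)) x).1 hxΨ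
      exact ⟨x δ, ⟨⟨hxX δ (Set.mem_univ δ), h1 δ⟩, h2 δ⟩⟩
    · rintro ⟨f, hf, hef⟩
      obtain ⟨rfl, rfl⟩ : n = (fun δ => (f δ).1) ∧ m = (fun δ => (f δ).2) :=
        ⟨(congrArg Prod.fst hef).symm, (congrArg Prod.snd hef).symm⟩
      choose x hx using fun δ => hf δ (Set.mem_univ δ)
      refine ⟨fun δ => x δ, ⟨⟨fun δ _ => (hx δ).1.1, ?_⟩, ?_⟩⟩
      · exact (mem_csupp_tensor (fun δ => Φ δ ((f δ).1)) _).2 fun δ => (hx δ).1.2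
      · exact (mem_csupp_tensor (fun δ => Ψ δ ((f δ).2)) _).2 fun δ => (hx δ).2
  rw [hset, Set.ncard_image_of_injective _ einj]
  have hcard : (Set.pi Set.univ S).ncard = ∏ δ, (S δ).ncard := by
    rw [← Nat.card_coe_set_eq, Nat.card_congr (Equiv.Set.univPi S), Nat.card_pi]
    simp only [Nat.card_coe_set_eq]
  rw [hcard]
  exact Finset.prod_le_prod' fun δ _ => nnz_dim_one (X δ) (Φ δ) (Ψ δ) (hΦ δ) (hΨ δ)
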